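/- For F : ℝⁿ → ℝ differentiable with L-Lipschitz gradient ∇F, h : ℝᵈ → ℝ, matrices A ∈ ℝ^{p×n}, B ∈ ℝ^{p×d}, c ∈ ℝᵖ and ρ > 0, let L_ρ(x,y,λ) = F(x) + h(y) − ⟨λ, Ax + By − c⟩ + (ρ/2)‖Ax + By − c‖². Let Q ∈ ℝ^{n×n} be symmetric with φ_min‖w‖² ≤ ⟨w, Qw⟩ for all w ∈ ℝⁿ (φ_min > 0), and let σ_A ≥ 0 satisfy σ_A‖w‖² ≤ ‖Aw‖² for all w ∈ ℝⁿ. Fix y ∈ ℝᵈ, λ ∈ ℝᵖ, η > 0, ν > 0, and suppose x, x₊ ∈ ℝⁿ and v ∈ ℝⁿ satisfy the stationarity condition 0 = v − Aᵀλ + ρAᵀ(Ax₊ + By − c) − ηQ(x − x₊). Then L_ρ(x₊, y, λ) ≤ L_ρ(x, y, λ) + (ν/2)‖v − ∇F(x)‖² − (ηφ_min + σ_Aρ/2 − L/2 − 1/(2ν))·‖x₊ − x‖². -/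

import Mathlib

/-!
Write `s = x₊ - x`. Expanding the augmented Lagrangian in `s` gives
`L_ρ(x₊) - L_ρ(x) = F(x₊) - F(x) - ⟨Aᵀλ - ρAᵀ(Ax₊ + By - c), s⟩ - (ρ/2)‖As‖²`, and the
stationarity condition turns the inner product into `⟨v, s⟩ + η⟨s, Qs⟩`. The descent lemma
`F(x + s) ≤ F(x) + ⟨∇F(x), s⟩ + (L/2)‖s‖²` and Young's inequality for `⟨∇F(x) - v, s⟩` then
leave only the lower bounds on `⟨s, Qs⟩` and `‖As‖²`.
-/

open Matrix
open scoped RealInnerProductSpace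

/-- The action of a real matrix on Euclidean space. -/
noncomputable def mvec {m n : ℕ} (A : Matrix (Fin m) (Fin n) ℝ)
    (x : EuclideanSpace ℝ (Fin n)) : EuclideanSpace ℝ (Fin m) :=
  (WithLp.equiv 2 (Fin m → ℝ)).symm (A.mulVec ((WithLp.equiv 2 (Fin n → ℝ)) x))

/-- The augmented Lagrangian `L_ρ(x, y, λ)` of the problem
`min F(x) + h(y)  s.t.  Ax + By = c`. -/
noncomputable def augLag {n d p : ℕ} (F : EuclideanSpace ℝ (Fin n) → ℝ)
    (h : EuclideanSpace ℝ (Fin d) → ℝ) (A : Matrix (Fin p) (Fin n) ℝ)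
    (B : Matrix (Fin p) (Fin d) ℝ) (c : EuclideanSpace ℝ (Fin p)) (ρ : ℝ)
    (x : EuclideanSpace ℝ (Fin n)) (y : EuclideanSpace ℝ (Fin d))
    (lam : EuclideanSpace ℝ (Fin p)) : ℝ :=
  F x + h y - ⟪lam, mvec A x + mvec B y - c⟫ + (ρ / 2) * ‖mvec A x + mvec B y - c‖ ^ 2

theorem mvec_sub {m n : ℕ} (A : Matrix (Fin m) (Fin n) ℝ) (a b : EuclideanSpace ℝ (Fin n)) :
    mvec A (a - b) = mvec A a - mvec A b := by
  ext i
  simp [mvec, Matrix.mulVec_sub]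

theorem inner_mvec_right {m n : ℕ} (A : Matrix (Fin m) (Fin n) ℝ) (u : EuclideanSpace ℝ (Fin m))
    (w : EuclideanSpace ℝ (Fin n)) : ⟪u, mvec A w⟫ = ⟪mvec Aᵀ u, w⟫ := by
  simp only [mvec, PiLp.inner_apply, RCLike.inner_apply, conj_trivial,
    Matrix.mulVec_transpose, WithLp.equiv_symm_apply, WithLp.equiv_apply]
  simpa [dotProduct, mul_comm] using Matrix.dotProduct_mulVec u.ofLp A w.ofLp

theorem augLag_sub_augLag {n d p : ℕ} (F : EuclideanSpace ℝ (Fin n) → ℝ)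
    (h : EuclideanSpace ℝ (Fin d) → ℝ) (A : Matrix (Fin p) (Fin n) ℝ)
    (B : Matrix (Fin p) (Fin d) ℝ) (c : EuclideanSpace ℝ (Fin p)) (ρ : ℝ)
    (x x' : EuclideanSpace ℝ (Fin n)) (y : EuclideanSpace ℝ (Fin d))
    (lam : EuclideanSpace ℝ (Fin p)) :
    augLag F h A B c ρ x' y lam - augLag F h A B c ρ x y lam =
      F x' - F x - ⟪mvec Aᵀ lam - ρ • mvec Aᵀ (mvec A x' + mvec B y - c), x' - x⟫ -
        ρ / 2 * ‖mvec A (x' - x)‖ ^ 2 := by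
  have hr : mvec A x + mvec B y - c = (mvec A x' + mvec B y - c) - mvec A (x' - x) := by
    rw [mvec_sub]; abel
  rw [augLag, augLag, hr, inner_sub_left, real_inner_smul_left, ← inner_mvec_right,
    ← inner_mvec_right]
  generalize mvec A x' + mvec B y - c = r'
  rw [inner_sub_right, norm_sub_sq_real]
  ring

theorem HasGradientAt.le_add_inner_add_sq_of_lipschitz {E : Type*} [NormedAddCommGroup E]
    [InnerProductSpace ℝ E] [CompleteSpace E] {F : E → ℝ} {gradF : E → E}
    (hgrad : ∀ z, HasGradientAt F (gradF z) z) {L : ℝ}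
    (hlip : ∀ z z', ‖gradF z - gradF z'‖ ≤ L * ‖z - z'‖) (x s : E) :
    F (x + s) ≤ F x + ⟪gradF x, s⟫ + L / 2 * ‖s‖ ^ 2 := by
  set g : ℝ → ℝ := fun t => F (x + t • s) - t * ⟪gradF x, s⟫ - L / 2 * t ^ 2 * ‖s‖ ^ 2
  have hg : ∀ t, HasDerivAt g (⟪gradF (x + t • s), s⟫ - ⟪gradF x, s⟫ - L * t * ‖s‖ ^ 2) t := by
    intro t
    have hpath : HasDerivAt (fun t : ℝ => x + t • s) s t := by
      simpa using ((hasDerivAt_id t).smul_const s).const_add x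
    have hF := (hgrad (x + t • s)).hasFDerivAt.comp_hasDerivAt t hpath
    simp only [InnerProductSpace.toDual_apply_apply] at hF
    have hquad : HasDerivAt (fun t : ℝ => L / 2 * t ^ 2 * ‖s‖ ^ 2) (L * t * ‖s‖ ^ 2) t :=
      (((hasDerivAt_pow 2 t).const_mul (L / 2)).mul_const _).congr_deriv (by ring)
    exact (hF.sub (hasDerivAt_mul_const _)).sub hquad
  have hslope : ∀ t ∈ interior (Set.Ici (0 : ℝ)),
      ⟪gradF (x + t • s), s⟫ - ⟪gradF x, s⟫ - L * t * ‖s‖ ^ 2 ≤ 0 := by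
    intro t ht
    rw [interior_Ici, Set.mem_Ioi] at ht
    rw [sub_nonpos]
    have hstep : ‖gradF (x + t • s) - gradF x‖ ≤ L * t * ‖s‖ := by
      simpa [norm_smul, abs_of_pos ht, mul_assoc] using hlip (x + t • s) x
    calc ⟪gradF (x + t • s), s⟫ - ⟪gradF x, s⟫ = ⟪gradF (x + t • s) - gradF x, s⟫ :=
          (inner_sub_left _ _ _).symm
      _ ≤ ‖gradF (x + t • s) - gradF x‖ * ‖s‖ := real_inner_le_norm _ _
      _ ≤ L * t * ‖s‖ * ‖s‖ := by gcongr
      _ = L * t * ‖s‖ ^ 2 := by ring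
  have hanti : AntitoneOn g (Set.Ici 0) :=
    antitoneOn_of_hasDerivWithinAt_nonpos (convex_Ici 0)
      (fun t _ => (hg t).continuousAt.continuousWithinAt)
      (fun t _ => (hg t).hasDerivWithinAt) hslope
  have h01 : g 1 ≤ g 0 := hanti Set.self_mem_Ici (Set.mem_Ici.mpr zero_le_one) zero_le_one
  simp only [g, one_smul, zero_smul, add_zero, one_pow, one_mul, zero_mul, sub_zero, mul_one,
    zero_pow two_ne_zero, mul_zero] at h01
  linarith

theorem real_inner_le_young {E : Type*} [NormedAddCommGroup E] [InnerProductSpace ℝ E]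
    {ν : ℝ} (hν : 0 < ν) (u w : E) :
    ⟪u, w⟫ ≤ ν / 2 * ‖u‖ ^ 2 + 1 / (2 * ν) * ‖w‖ ^ 2 := by
  have h := norm_sub_sq_real (ν • u) w
  rw [norm_smul, real_inner_smul_left, Real.norm_of_nonneg hν.le] at h
  have key : 0 ≤ ‖ν • u - w‖ ^ 2 / (2 * ν) := by positivity
  rw [h] at key
  field_simp at key ⊢
  linarith

theorem stmt_5_general {n d p : ℕ} (F : EuclideanSpace ℝ (Fin n) → ℝ)
    (gradF : EuclideanSpace ℝ (Fin n) → EuclideanSpace ℝ (Fin n))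
    (hgrad : ∀ z, HasGradientAt F (gradF z) z)
    (L : ℝ)
    (hlip : ∀ z z', ‖gradF z - gradF z'‖ ≤ L * ‖z - z'‖)
    (h : EuclideanSpace ℝ (Fin d) → ℝ)
    (A : Matrix (Fin p) (Fin n) ℝ) (B : Matrix (Fin p) (Fin d) ℝ)
    (c : EuclideanSpace ℝ (Fin p)) (ρ : ℝ) (hρ : 0 < ρ)
    (Q : Matrix (Fin n) (Fin n) ℝ)
    (φmin : ℝ)
    (hQ : ∀ w : EuclideanSpace ℝ (Fin n), φmin * ‖w‖ ^ 2 ≤ ⟪w, mvec Q w⟫)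
    (σA : ℝ)
    (hA : ∀ w : EuclideanSpace ℝ (Fin n), σA * ‖w‖ ^ 2 ≤ ‖mvec A w‖ ^ 2)
    (y : EuclideanSpace ℝ (Fin d)) (lam : EuclideanSpace ℝ (Fin p))
    (η ν : ℝ) (hη : 0 < η) (hν : 0 < ν)
    (x xp v : EuclideanSpace ℝ (Fin n))
    (hstat : (0 : EuclideanSpace ℝ (Fin n)) =
      v - mvec Aᵀ lam + ρ • mvec Aᵀ (mvec A xp + mvec B y - c) - η • mvec Q (x - xp)) :
    augLag F h A B c ρ xp y lam ≤
      augLag F h A B c ρ x y lam + (ν / 2) * ‖v - gradF x‖ ^ 2 -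
        (η * φmin + σA * ρ / 2 - L / 2 - 1 / (2 * ν)) * ‖xp - x‖ ^ 2 := by
  have hstep : mvec Aᵀ lam - ρ • mvec Aᵀ (mvec A xp + mvec B y - c) =
      v + η • mvec Q (xp - x) := by
    rw [mvec_sub Q x xp] at hstat
    rw [mvec_sub Q xp x]
    linear_combination (norm := module) hstat
  have hdiff := augLag_sub_augLag F h A B c ρ x xp y lam
  rw [hstep, inner_add_left, real_inner_smul_left, real_inner_comm (xp - x) (mvec Q _)] at hdiff
  have hdesc := HasGradientAt.le_add_inner_add_sq_of_lipschitz hgrad hlip x (xp - x)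
  rw [add_sub_cancel] at hdesc
  have hyoung := real_inner_le_young hν (gradF x - v) (xp - x)
  rw [inner_sub_left, norm_sub_rev] at hyoung
  linarith [mul_le_mul_of_nonneg_left (hQ (xp - x)) hη.le,
    mul_le_mul_of_nonneg_left (hA (xp - x)) hρ.le]

theorem stmt_5 {n d p : ℕ} (F : EuclideanSpace ℝ (Fin n) → ℝ)
    (gradF : EuclideanSpace ℝ (Fin n) → EuclideanSpace ℝ (Fin n))
    (hgrad : ∀ z, HasGradientAt F (gradF z) z)
    (L : ℝ) (hL : 0 ≤ L)
    (hlip : ∀ z z', ‖gradF z - gradF z'‖ ≤ L * ‖z - z'‖)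
    (h : EuclideanSpace ℝ (Fin d) → ℝ)
    (A : Matrix (Fin p) (Fin n) ℝ) (B : Matrix (Fin p) (Fin d) ℝ)
    (c : EuclideanSpace ℝ (Fin p)) (ρ : ℝ) (hρ : 0 < ρ)
    (Q : Matrix (Fin n) (Fin n) ℝ) (hQsymm : Q.IsSymm)
    (φmin : ℝ) (hφmin : 0 < φmin)
    (hQ : ∀ w : EuclideanSpace ℝ (Fin n), φmin * ‖w‖ ^ 2 ≤ ⟪w, mvec Q w⟫)
    (σA : ℝ) (hσA : 0 ≤ σA)
    (hA : ∀ w : EuclideanSpace ℝ (Fin n), σA * ‖w‖ ^ 2 ≤ ‖mvec A w‖ ^ 2)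
    (y : EuclideanSpace ℝ (Fin d)) (lam : EuclideanSpace ℝ (Fin p))
    (η ν : ℝ) (hη : 0 < η) (hν : 0 < ν)
    (x xp v : EuclideanSpace ℝ (Fin n))
    (hstat : (0 : EuclideanSpace ℝ (Fin n)) =
      v - mvec Aᵀ lam + ρ • mvec Aᵀ (mvec A xp + mvec B y - c) - η • mvec Q (x - xp)) :
    augLag F h A B c ρ xp y lam ≤
      augLag F h A B c ρ x y lam + (ν / 2) * ‖v - gradF x‖ ^ 2 -
        (η * φmin + σA * ρ / 2 - L / 2 - 1 / (2 * ν)) * ‖xp - x‖ ^ 2 :=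
  stmt_5_general F gradF hgrad L hlip h A B c ρ hρ Q φmin hQ σA hA y lam η ν hη hν x xp v hstat
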